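/- Let 2₁ = {2} denote the game whose sole option is a Nim heap of size 2. Then for every three-player impartial game G not identical to the null game 0, the sum G + 2₁ is a Q-game. Consequently, no game is equivalent to 0 (where G and H are equivalent iff for every game X, G + X and H + X have the same type). -/

import Mathlib

/-! The type of a game depends only on the set of types of its options, so sums with a
move-less game can be ignored. Induct on `G`: the options of `G + 2₁` are the `Gᵢ + 2₁`,
which are `Q`-games by induction or, when `Gᵢ` has no moves, copies of the `O`-game `2₁`,
together with `G + *2`. The latter is never a `P`-game, since otherwise both `G + *1` and its
option `G + *0 ≅ G` would be `O`-games. If some `Gᵢ` has a move we get a `Q`-option; otherwise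
all `Gᵢ` are `P`-games, which makes `G + *1` an `O`-game and hence `G + *2` not an `O`-game.
Since `0 + 2₁ ≅ 2₁` is an `O`-game, the sum with `2₁` separates every nonzero `G` from `0`. -/

/-- Three-player impartial games: well-founded game trees. -/
inductive G3 : Type 1 where
  | mk : (ι : Type) → (ι → G3) → G3

namespace G3

/-- The index type of options (moves) of a game. -/
def moves : G3 → Type
  | mk ι _ => ι

/-- The option of a game corresponding to a move. -/
def moveFn : (g : G3) → moves g → G3
  | mk _ f => f

/-- Disjunctive sum: move in exactly one component. -/
noncomputable def add : G3 → G3 → G3 :=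
  G3.rec (fun ι f ihf =>
    G3.rec (fun κ g ihg =>
      mk (ι ⊕ κ) (fun x =>
        match x with
        | Sum.inl i => ihf i (mk κ g)
        | Sum.inr j => ihg j)))

/-- The four outcome types of a three-player impartial game. -/
inductive PType : Type
  | N | O | P | Q
deriving DecidableEq

open Classical in
/-- The type of a game: `N` iff some option is a `P`-game; `O` iff it has at least
one option and all options are `N`-games; `P` iff all options are `O`-games;
`Q` otherwise. -/
noncomputable def typ : G3 → PType
  | mk ι f =>
    if ∃ i, typ (f i) = PType.P then PType.N
    else if Nonempty ι ∧ ∀ i, typ (f i) = PType.N then PType.O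
    else if ∀ i, typ (f i) = PType.O then PType.P
    else PType.Q

/-- The Nim heap of size `n`: options are heaps of sizes `0, …, n-1`. -/
def nim : ℕ → G3
  | n => mk (Fin n) (fun i => nim i)
termination_by n => n
decreasing_by exact i.isLt

/-- The sum of `n` Nim heaps of size 1. -/
noncomputable def ones : ℕ → G3
  | 0 => nim 0
  | n + 1 => add (ones n) (nim 1)

/-- The game `2₁ = {2}`, whose sole option is a Nim heap of size 2. -/
noncomputable def twoOne : G3 := mk PUnit (fun _ => nim 2)

open Set

open Classical in
noncomputable def PType.ofOptions (s : Set PType) : PType :=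
  if PType.P ∈ s then PType.N
  else if s.Nonempty ∧ s ⊆ {PType.N} then PType.O
  else if s ⊆ {PType.O} then PType.P
  else PType.Q

namespace PType

variable {s : Set PType}

theorem ofOptions_eq_N_iff : ofOptions s = N ↔ P ∈ s := by
  unfold ofOptions
  split_ifs with hP
  · exact iff_of_true rfl hP
  all_goals exact iff_of_false (by decide) hP

theorem ofOptions_eq_O_iff : ofOptions s = O ↔ s.Nonempty ∧ s ⊆ {N} := by
  unfold ofOptions
  split_ifs with hP hN
  · exact iff_of_false (by decide) fun ⟨_, h⟩ => absurd (h hP) (by simp)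
  · exact iff_of_true rfl hN
  all_goals exact iff_of_false (by decide) hN

theorem ofOptions_eq_P_iff : ofOptions s = P ↔ s ⊆ {O} := by
  unfold ofOptions
  split_ifs with hP hN hO
  · exact iff_of_false (by decide) fun h => absurd (h hP) (by simp)
  · obtain ⟨⟨t, ht⟩, hsN⟩ := hN
    refine iff_of_false (by decide) fun hsO => ?_
    have : N = O := (mem_singleton_iff.1 (hsN ht)).symm.trans (hsO ht)
    exact absurd this (by decide)
  · exact iff_of_true rfl hO
  · exact iff_of_false (by decide) hO

theorem ofOptions_eq_Q_iff :
    ofOptions s = Q ↔ P ∉ s ∧ (∃ t ∈ s, t ≠ N) ∧ ∃ t ∈ s, t ≠ O := by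
  have key : ofOptions s = Q ↔ ofOptions s ≠ N ∧ ofOptions s ≠ O ∧ ofOptions s ≠ P := by
    cases ofOptions s <;> decide
  simp only [key, ne_eq, ofOptions_eq_N_iff, ofOptions_eq_O_iff, ofOptions_eq_P_iff,
    not_subset, mem_singleton_iff, not_and]
  exact and_congr_right fun _ =>
    ⟨fun ⟨hN, t, ht, hO⟩ => ⟨hN ⟨t, ht⟩, t, ht, hO⟩, fun ⟨hN, hO⟩ => ⟨fun _ => hN, hO⟩⟩

end PType

def optionTypes (G : G3) : Set PType := range fun i => typ (G.moveFn i)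

open Classical in
theorem typ_eq_ofOptions (G : G3) : typ G = PType.ofOptions G.optionTypes := by
  obtain ⟨ι, f⟩ := G
  have hP : PType.P ∈ (mk ι f).optionTypes ↔ ∃ i, typ (f i) = PType.P := mem_range
  have hN : ((mk ι f).optionTypes.Nonempty ∧ (mk ι f).optionTypes ⊆ {PType.N}) ↔
      Nonempty ι ∧ ∀ i, typ (f i) = PType.N := by
    rw [optionTypes, range_nonempty_iff_nonempty, range_subset_iff]; rfl
  have hO : (mk ι f).optionTypes ⊆ {PType.O} ↔ ∀ i, typ (f i) = PType.O := range_subset_iff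
  rw [typ, PType.ofOptions]
  simp only [hP, hN, hO]

section Types

variable {G : G3}

theorem typ_eq_N_iff : typ G = PType.N ↔ PType.P ∈ G.optionTypes := by
  rw [typ_eq_ofOptions, PType.ofOptions_eq_N_iff]

theorem typ_eq_O_iff :
    typ G = PType.O ↔ G.optionTypes.Nonempty ∧ G.optionTypes ⊆ {PType.N} := by
  rw [typ_eq_ofOptions, PType.ofOptions_eq_O_iff]

theorem typ_eq_P_iff : typ G = PType.P ↔ G.optionTypes ⊆ {PType.O} := by
  rw [typ_eq_ofOptions, PType.ofOptions_eq_P_iff]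

theorem typ_eq_Q_iff : typ G = PType.Q ↔ PType.P ∉ G.optionTypes ∧
    (∃ t ∈ G.optionTypes, t ≠ PType.N) ∧ ∃ t ∈ G.optionTypes, t ≠ PType.O := by
  rw [typ_eq_ofOptions, PType.ofOptions_eq_Q_iff]

theorem typ_of_isEmpty (hG : IsEmpty G.moves) : typ G = PType.P := by
  rw [typ_eq_P_iff, optionTypes, range_eq_empty_iff.2 hG]
  exact empty_subset _

end Types

theorem optionTypes_add (G H : G3) : (add G H).optionTypes =
    (range fun i => typ (add (G.moveFn i) H)) ∪ range fun j => typ (add G (H.moveFn j)) := by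
  obtain ⟨ι, f⟩ := G
  obtain ⟨κ, g⟩ := H
  rw [optionTypes, ← Set.Sum.elim_range]
  exact congrArg range (funext fun x => by cases x <;> rfl)

theorem typ_add_of_isEmpty_left {H : G3} (hH : IsEmpty H.moves) (X : G3) :
    typ (add H X) = typ X := by
  induction X with
  | mk κ g ih =>
    rw [typ_eq_ofOptions, typ_eq_ofOptions (mk κ g), optionTypes_add, range_eq_empty_iff.2 hH,
      empty_union]
    exact congrArg _ (congrArg range (funext ih))

theorem typ_add_of_isEmpty_right {H : G3} (hH : IsEmpty H.moves) (X : G3) :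
    typ (add X H) = typ X := by
  induction X with
  | mk ι f ih =>
    rw [typ_eq_ofOptions, typ_eq_ofOptions (mk ι f), optionTypes_add, range_eq_empty_iff.2 hH,
      union_empty]
    exact congrArg _ (congrArg range (funext ih))

theorem nim_eq_mk (n : ℕ) : nim n = mk (Fin n) fun i => nim i := by
  rw [nim]

theorem isEmpty_moves_nim_zero : IsEmpty (nim 0).moves := by
  rw [nim_eq_mk]
  exact Fin.isEmpty'

theorem typ_add_nim_zero (G : G3) : typ (add G (nim 0)) = typ G :=
  typ_add_of_isEmpty_right isEmpty_moves_nim_zero G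

theorem optionTypes_add_nim (G : G3) (n : ℕ) : (add G (nim n)).optionTypes =
    (range fun i => typ (add (G.moveFn i) (nim n))) ∪
      range fun k : Fin n => typ (add G (nim k)) := by
  have h : ∀ F : G3 → PType,
      (range fun j => F ((nim n).moveFn j)) = range fun k : Fin n => F (nim k) := by
    rw [nim_eq_mk n]
    exact fun _ => rfl
  rw [optionTypes_add]
  exact congrArg _ (h fun H => typ (add G H))

theorem typ_add_nim_mem_optionTypes (G : G3) {k n : ℕ} (hk : k < n) :
    typ (add G (nim k)) ∈ (add G (nim n)).optionTypes := by
  rw [optionTypes_add_nim]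
  exact Or.inr ⟨⟨k, hk⟩, rfl⟩

theorem typ_add_nim_of_typ_eq_P {G : G3} (hG : typ G = PType.P) {n : ℕ} (hn : n ≠ 0) :
    typ (add G (nim n)) = PType.N := by
  rw [typ_eq_N_iff, ← hG, ← typ_add_nim_zero G]
  exact typ_add_nim_mem_optionTypes G (Nat.pos_of_ne_zero hn)

theorem typ_nim {n : ℕ} (hn : n ≠ 0) : typ (nim n) = PType.N := by
  rw [← typ_add_of_isEmpty_left isEmpty_moves_nim_zero]
  exact typ_add_nim_of_typ_eq_P (typ_of_isEmpty isEmpty_moves_nim_zero) hn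

theorem typ_twoOne : typ twoOne = PType.O := by
  have h : twoOne.optionTypes = {PType.N} := by
    show range (fun _ : PUnit => typ (nim 2)) = _
    rw [typ_nim two_ne_zero]
    exact range_const
  rw [typ_eq_O_iff, h]
  exact ⟨singleton_nonempty _, subset_rfl⟩

theorem optionTypes_add_twoOne (G : G3) : (add G twoOne).optionTypes =
    (range fun i => typ (add (G.moveFn i) twoOne)) ∪ {typ (add G (nim 2))} := by
  rw [optionTypes_add]
  exact congrArg _ (range_const : range (fun _ : PUnit => typ (add G (nim 2))) = _)

theorem typ_add_nim_two_ne_P (G : G3) : typ (add G (nim 2)) ≠ PType.P := by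
  intro h
  have hO : ∀ k < 2, typ (add G (nim k)) = PType.O := fun k hk =>
    typ_eq_P_iff.1 h (typ_add_nim_mem_optionTypes G hk)
  have hN : typ (add G (nim 0)) = PType.N :=
    (typ_eq_O_iff.1 (hO 1 one_lt_two)).2 (typ_add_nim_mem_optionTypes G one_pos)
  rw [hO 0 two_pos] at hN
  exact absurd hN (by decide)

theorem typ_add_nim_one_of_forall_typ_eq_P {G : G3} (hne : Nonempty G.moves)
    (hG : ∀ i, typ (G.moveFn i) = PType.P) : typ (add G (nim 1)) = PType.O := by
  have hGN : typ G = PType.N := typ_eq_N_iff.2 ⟨hne.some, hG _⟩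
  rw [typ_eq_O_iff, optionTypes_add_nim]
  refine ⟨⟨typ (add G (nim 0)), Or.inr ⟨0, rfl⟩⟩, union_subset ?_ ?_⟩
  · rintro _ ⟨i, rfl⟩
    exact typ_add_nim_of_typ_eq_P (hG i) one_ne_zero
  · rintro _ ⟨k, rfl⟩
    rw [Subsingleton.elim k 0]
    show typ (add G (nim 0)) = PType.N
    rw [typ_add_nim_zero, hGN]

theorem typ_add_nim_two_ne_O_of_forall_typ_eq_P {G : G3} (hne : Nonempty G.moves)
    (hG : ∀ i, typ (G.moveFn i) = PType.P) : typ (add G (nim 2)) ≠ PType.O := by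
  intro h
  have h1 := (typ_eq_O_iff.1 h).2 (typ_add_nim_mem_optionTypes G one_lt_two)
  rw [mem_singleton_iff, typ_add_nim_one_of_forall_typ_eq_P hne hG] at h1
  exact absurd h1 (by decide)

theorem typ_add_twoOne (G : G3) (hG : Nonempty G.moves) : typ (add G twoOne) = PType.Q := by
  induction G with
  | mk ι f ih =>
    have hopt : ∀ t ∈ range fun i => typ (add (f i) twoOne), t = PType.Q ∨ t = PType.O := by
      rintro _ ⟨i, rfl⟩
      exact (em (Nonempty (f i).moves)).imp (ih i) fun h =>
        (typ_add_of_isEmpty_left (not_nonempty_iff.1 h) _).trans typ_twoOne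
    obtain ⟨i₀⟩ := hG
    have h₀ : typ (add (f i₀) twoOne) ∈ range fun i => typ (add (f i) twoOne) := mem_range_self i₀
    rw [typ_eq_Q_iff, optionTypes_add_twoOne]
    refine ⟨?_, ⟨_, Or.inl h₀, ?_⟩, ?_⟩
    · rintro (hP | hP)
      · rcases hopt _ hP with h | h <;> cases h
      · exact typ_add_nim_two_ne_P _ hP.symm
    · rcases hopt _ h₀ with h | h <;> rw [h] <;> decide
    · by_cases hex : ∃ i, Nonempty (f i).moves
      · obtain ⟨i, hi⟩ := hex
        exact ⟨_, Or.inl ⟨i, ih i hi⟩, by decide⟩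
      · push Not at hex
        refine ⟨_, Or.inr rfl, typ_add_nim_two_ne_O_of_forall_typ_eq_P ⟨i₀⟩ fun i => ?_⟩
        exact typ_of_isEmpty (hex i)

theorem add_twoOne_Q_and_no_game_equiv_zero :
    (∀ G : G3, Nonempty (moves G) → typ (add G twoOne) = PType.Q) ∧
    (∀ G : G3, Nonempty (moves G) →
      ¬ ∀ X : G3, typ (add G X) = typ (add (nim 0) X)) := by
  refine ⟨typ_add_twoOne, fun G hG hequiv => ?_⟩
  have h := hequiv twoOne
  rw [typ_add_twoOne G hG, typ_add_of_isEmpty_left isEmpty_moves_nim_zero, typ_twoOne] at h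
  exact absurd h (by decide)

end G3
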